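/- arXiv:2006.15232 — 4 statements merged into one kernel-verified Lean document; each statement's English description precedes it below -/
import Mathlib

section
/- Let (M, θ) be a graded von Neumann algebra, where θ is an involutive *-automorphism of M. Suppose M is central, i.e., Z(M) ∩ M⁽⁰⁾ = ℂ·1, where M⁽⁰⁾ = {x ∈ M : θ(x) = x} is the even part. Then either Z(M) = ℂ·1, or there exists a self-adjoint unitary b ∈ Z(M) with θ(b) = −b such that Z(M) ∩ M⁽¹⁾ = ℂ·b, where M⁽¹⁾ = {x ∈ M : θ(x) = −x}. -/
/-!
A von Neumann algebra is norm closed, so it suffices to argue in a unital C⋆-algebra `A`.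
If some central `z` is not a scalar, its odd part `z - θ z` is nonzero, and so is its real or
imaginary part `a`, which is again central and odd. Then `a * a` is central and even, hence a
scalar `c`; as `a` is self-adjoint, any point `t` of its spectrum is real and `t ^ 2 = c ≠ 0`, so
`b = t⁻¹ • a` is a self-adjoint unitary. Finally an odd central `z` makes `z * b` central and
even, say `d • 1`, whence `z = z * b * b = d • b`.
-/

section

open ComplexStarModule NonUnitalStarSubalgebra

section ComplexStarModule

variable {A S : Type*} [AddCommGroup A] [Module ℂ A] [StarAddMonoid A] [StarModule ℂ A]
  [SetLike S A] [AddSubgroupClass S A] [SMulMemClass S ℂ A] [StarMemClass S A] {s : S} {a : A}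

lemma realPart_mem (ha : a ∈ s) : (ℜ a : A) ∈ s := by
  rw [realPart_apply_coe, ← Complex.coe_smul]
  exact SMulMemClass.smul_mem _ (add_mem ha (star_mem ha))

lemma imaginaryPart_mem (ha : a ∈ s) : (ℑ a : A) ∈ s := by
  rw [imaginaryPart_apply_coe, ← Complex.coe_smul]
  exact SMulMemClass.smul_mem _ (SMulMemClass.smul_mem _ (sub_mem ha (star_mem ha)))

end ComplexStarModule

section GradedStarAlgebra

variable {A : Type*} [Ring A] [StarRing A] [Algebra ℂ A] (θ : A ≃⋆ₐ[ℂ] A)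

lemma exists_odd_ne_zero_mem_center (hθ : ∀ x, θ (θ x) = x)
    (hθc : ∀ z ∈ center ℂ A, θ z = z → ∃ c : ℂ, z = c • 1)
    (hA : ¬ ∀ z ∈ center ℂ A, ∃ c : ℂ, z = c • 1) :
    ∃ w ∈ center ℂ A, w ≠ 0 ∧ θ w = -w := by
  push Not at hA
  obtain ⟨z, hz, hz1⟩ := hA
  have hθz : θ z ∈ center ℂ A := MulEquivClass.apply_mem_center θ hz
  refine ⟨z - θ z, sub_mem hz hθz, fun h => ?_, by rw [map_sub, hθ, neg_sub]⟩
  obtain ⟨c, hc⟩ := hθc z hz (sub_eq_zero.mp h).symm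
  exact hz1 c hc

lemma exists_odd_isSelfAdjoint_ne_zero_mem_center [StarModule ℂ A] {w : A}
    (hw : w ∈ center ℂ A) (hw0 : w ≠ 0) (hθw : θ w = -w) :
    ∃ a ∈ center ℂ A, IsSelfAdjoint a ∧ a ≠ 0 ∧ θ a = -a := by
  by_cases hre : (ℜ w : A) = 0
  · refine ⟨ℑ w, imaginaryPart_mem hw, (ℑ w).2, fun him => hw0 ?_, ?_⟩
    · rw [← realPart_add_I_smul_imaginaryPart w, hre, him, smul_zero, add_zero]
    · rw [map_imaginaryPart, hθw, map_neg, NegMemClass.coe_neg]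
  · refine ⟨ℜ w, realPart_mem hw, (ℜ w).2, hre, ?_⟩
    rw [map_realPart, hθw, map_neg, NegMemClass.coe_neg]

lemma exists_eq_smul_of_odd_mem_center {b z : A}
    (hθc : ∀ z ∈ center ℂ A, θ z = z → ∃ c : ℂ, z = c • 1)
    (hb : b ∈ center ℂ A) (hbb : b * b = 1) (hθb : θ b = -b)
    (hz : z ∈ center ℂ A) (hθz : θ z = -z) : ∃ c : ℂ, z = c • b := by
  obtain ⟨c, hc⟩ := hθc (z * b) (mul_mem hz hb) (by rw [map_mul, hθz, hθb, neg_mul_neg])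
  refine ⟨c, ?_⟩
  calc z = z * b * b := by rw [mul_assoc, hbb, mul_one]
    _ = c • b := by rw [hc, smul_mul_assoc, one_mul]

end GradedStarAlgebra

section CStarAlgebra

variable {A : Type*} [CStarAlgebra A]

lemma IsSelfAdjoint.exists_ofReal_smul_mul_self_eq_one {a : A} (ha : IsSelfAdjoint a)
    (ha0 : a ≠ 0) {c : ℂ} (hc : a * a = c • 1) : ∃ r : ℝ, ((r : ℂ) • a) * ((r : ℂ) • a) = 1 := by
  have : Nontrivial A := nontrivial_of_ne a 0 ha0
  obtain ⟨μ, hμ⟩ := spectrum.nonempty a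
  obtain ⟨t, rfl⟩ : ∃ t : ℝ, μ = t := ⟨μ.re, ha.mem_spectrum_eq_re hμ⟩
  have htc : (t : ℂ) ^ 2 = c := by
    have := spectrum.pow_mem_pow a 2 hμ
    rwa [pow_two a, hc, ← Algebra.algebraMap_eq_smul_one, spectrum.scalar_eq,
      Set.mem_singleton_iff] at this
  have ht0 : (t : ℂ) ≠ 0 := by
    rintro ht
    have : star a * a = 0 := by rw [ha.star_eq, hc, ← htc, ht, zero_pow two_ne_zero, zero_smul]
    exact ha0 ((CStarRing.star_mul_self_eq_zero_iff a).mp this)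
  refine ⟨t⁻¹, ?_⟩
  rw [smul_mul_smul_comm, hc, smul_smul, ← htc, Complex.ofReal_inv]
  field_simp
  exact one_smul ℂ 1

theorem CStarAlgebra.center_eq_scalars_or_exists_odd_selfAdjoint_unitary
    (θ : A ≃⋆ₐ[ℂ] A) (hθ : ∀ x, θ (θ x) = x)
    (hθc : ∀ z ∈ center ℂ A, θ z = z → ∃ c : ℂ, z = c • 1) :
    (∀ z ∈ center ℂ A, ∃ c : ℂ, z = c • 1) ∨
    ∃ b ∈ center ℂ A, IsSelfAdjoint b ∧ b * b = 1 ∧ θ b = -b ∧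
      ∀ z ∈ center ℂ A, θ z = -z → ∃ c : ℂ, z = c • b := by
  refine or_iff_not_imp_left.mpr fun hA => ?_
  obtain ⟨w, hw, hw0, hθw⟩ := exists_odd_ne_zero_mem_center θ hθ hθc hA
  obtain ⟨a, ha, hsa, ha0, hθa⟩ := exists_odd_isSelfAdjoint_ne_zero_mem_center θ hw hw0 hθw
  obtain ⟨c, hc⟩ := hθc (a * a) (mul_mem ha ha) (by rw [map_mul, hθa, neg_mul_neg])
  obtain ⟨r, hr⟩ := hsa.exists_ofReal_smul_mul_self_eq_one ha0 hc
  have hθb : θ ((r : ℂ) • a) = -((r : ℂ) • a) := by rw [map_smul, hθa, smul_neg]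
  have hb : (r : ℂ) • a ∈ center ℂ A := SMulMemClass.smul_mem _ ha
  exact ⟨_, hb, IsSelfAdjoint.smul (Complex.conj_ofReal r) hsa, hr, hθb,
    fun z hz hθz => exists_eq_smul_of_odd_mem_center θ hθc hb hr hθb hz hθz⟩

end CStarAlgebra

end

lemma VonNeumannAlgebra.isClosed {H : Type*} [NormedAddCommGroup H] [InnerProductSpace ℂ H]
    [CompleteSpace H] (M : VonNeumannAlgebra H) :
    IsClosed (M.toStarSubalgebra : Set (H →L[ℂ] H)) := by
  change IsClosed M.carrier
  rw [← M.centralizer_centralizer']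
  exact Set.isClosed_centralizer _

/-- Let `(M, θ)` be a graded von Neumann algebra with `θ` an involutive
*-automorphism. If `M` is central (`Z(M) ∩ M⁽⁰⁾ = ℂ·1`), then either `Z(M) = ℂ·1`, or there
is a self-adjoint unitary `b ∈ Z(M)` with `θ(b) = −b` such that `Z(M) ∩ M⁽¹⁾ = ℂ·b`. -/
theorem stmt3 {H : Type*} [NormedAddCommGroup H] [InnerProductSpace ℂ H] [CompleteSpace H]
    (M : VonNeumannAlgebra H)
    (θ : ↥M.toStarSubalgebra ≃⋆ₐ[ℂ] ↥M.toStarSubalgebra)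
    (hθinv : ∀ x, θ (θ x) = x)
    (hcentral : ∀ z : ↥M.toStarSubalgebra,
      (∀ x, z * x = x * z) → θ z = z → ∃ c : ℂ, z = c • 1) :
    (∀ z : ↥M.toStarSubalgebra, (∀ x, z * x = x * z) → ∃ c : ℂ, z = c • 1) ∨
    (∃ b : ↥M.toStarSubalgebra, (∀ x, b * x = x * b) ∧ IsSelfAdjoint b ∧ b * b = 1 ∧
      θ b = -b ∧
      ∀ z : ↥M.toStarSubalgebra, (∀ x, z * x = x * z) → θ z = -z → ∃ c : ℂ, z = c • b) := by
  -- the instance `StarSubalgebra.cstarAlgebra` makes `M` a C⋆-algebra once it is closed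
  have := M.isClosed
  have hcenter (z : ↥M.toStarSubalgebra) :
      z ∈ NonUnitalStarSubalgebra.center ℂ _ ↔ ∀ x, z * x = x * z := by
    simp only [NonUnitalStarSubalgebra.mem_center_iff, eq_comm]
  simp only [← hcenter] at hcentral ⊢
  exact CStarAlgebra.center_eq_scalars_or_exists_odd_selfAdjoint_unitary θ hθinv hcentral
end

section
/- Let M ⊆ B(H) be a von Neumann algebra spatially graded by a self-adjoint unitary Γ on H (i.e., Ad_Γ(M) = M), and suppose M is central (Z(M) ∩ M⁽⁰⁾ = ℂ·1 for the grading θ = Ad_Γ|_M). If M is not a factor, then M ∩ M′Γ = {0}, where M′Γ = {x′Γ : x′ ∈ M′}. -/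
/-!
If `M` is not a factor, centrality gives a central element `w` that is odd, `Γ w Γ = -w`
(e.g. `z - Γ z Γ` for a non-scalar central `z`), and `w⋆ w` is then an even central element,
hence a scalar `c`, nonzero by the C⋆-identity. For `a = x' Γ ∈ M` with `x' ∈ M′`, the element
`w` commutes with `a` since `w` is central, and anticommutes with it since `w` is odd and commutes
with `x'`. Hence `w a = 0`, and `c a = w⋆ w a = 0`.
-/

open Set

section Monoid

variable {A : Type*} [Monoid A] {g : A}

theorem conj_mul_conj (hg : g * g = 1) (x y : A) :
    g * x * g * (g * y * g) = g * (x * y) * g := by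
  calc g * x * g * (g * y * g) = g * x * (g * g) * y * g := by simp only [mul_assoc]
    _ = g * (x * y) * g := by rw [hg, mul_one]; simp only [mul_assoc]

theorem conj_conj (hg : g * g = 1) (x : A) : g * (g * x * g) * g = x := by
  calc g * (g * x * g) * g = g * g * x * (g * g) := by simp only [mul_assoc]
    _ = x := by rw [hg, one_mul, mul_one]

theorem conj_mem_centralizer (hg : g * g = 1) {S : Set A} (hS : ∀ x ∈ S, g * x * g ∈ S) {z : A}
    (hz : z ∈ centralizer S) : g * z * g ∈ centralizer S := by
  intro y hy
  rw [← conj_conj hg y, conj_mul_conj hg, conj_mul_conj hg, hz _ (hS y hy)]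

end Monoid

section Ring

variable {A : Type*} [Ring A] {g : A}

theorem conj_sub_conj (hg : g * g = 1) (z : A) :
    g * (z - g * z * g) * g = -(z - g * z * g) := by
  rw [mul_sub, sub_mul, conj_conj hg]
  noncomm_ring

theorem mul_conj_mul_of_conj_eq_neg (hg : g * g = 1) {w x : A} (hw : g * w * g = -w)
    (hwx : w * x = x * w) : x * g * w = -(w * (x * g)) := by
  calc x * g * w = x * (g * w * g) * g := by
        rw [show x * (g * w * g) * g = x * g * w * (g * g) by noncomm_ring, hg, mul_one]
    _ = -(w * (x * g)) := by rw [hw, ← mul_assoc w, hwx]; noncomm_ring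

end Ring

theorem StarSubalgebra.star_mem_centralizer {R A : Type*} [CommSemiring R] [StarRing R]
    [Semiring A] [StarRing A] [Algebra R A] [StarModule R A] {S : StarSubalgebra R A} {w : A}
    (hw : w ∈ Set.centralizer (S : Set A)) : star w ∈ Set.centralizer (S : Set A) := by
  intro y hy
  simpa [star_mul] using congrArg star (hw (star y) (star_mem hy)).symm

section CStarAlgebra

variable {A : Type*} [CStarAlgebra A] {S : StarSubalgebra ℂ A} {g : A}

theorem exists_conj_eq_neg_of_not_scalar (hg : g * g = 1)
    (hS : ∀ x ∈ S, g * x * g ∈ S)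
    (hcentral : ∀ z ∈ S, z ∈ centralizer (S : Set A) → g * z * g = z → ∃ c : ℂ, z = c • 1)
    {z : A} (hzS : z ∈ S) (hz : z ∈ centralizer (S : Set A)) (hz_ne : ¬ ∃ c : ℂ, z = c • 1) :
    ∃ w ∈ S, w ∈ centralizer (S : Set A) ∧ g * w * g = -w ∧ w ≠ 0 := by
  have hz' := conj_mem_centralizer hg hS hz
  refine ⟨z - g * z * g, sub_mem hzS (hS z hzS), ?_, conj_sub_conj hg z, ?_⟩
  · intro y hy
    rw [mul_sub, sub_mul, hz y hy, hz' y hy]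
  · intro h
    exact hz_ne (hcentral z hzS hz (sub_eq_zero.mp h).symm)

theorem exists_star_mul_self_eq_smul_one (hg : IsSelfAdjoint g) (hg2 : g * g = 1)
    (hcentral : ∀ z ∈ S, z ∈ centralizer (S : Set A) → g * z * g = z → ∃ c : ℂ, z = c • 1)
    {w : A} (hwS : w ∈ S) (hw : w ∈ centralizer (S : Set A)) (hw_odd : g * w * g = -w)
    (hw_ne : w ≠ 0) : ∃ c : ℂ, c ≠ 0 ∧ star w * w = c • 1 := by
  have hw_star_odd : g * star w * g = -star w := by
    simpa [star_mul, hg.star_eq, mul_assoc] using congrArg star hw_odd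
  have h_even : g * (star w * w) * g = star w * w := by
    rw [← conj_mul_conj hg2, hw_star_odd, hw_odd, neg_mul_neg]
  obtain ⟨c, hc⟩ := hcentral _ (mul_mem (star_mem hwS) hwS)
    (mul_mem_centralizer (StarSubalgebra.star_mem_centralizer hw) hw) h_even
  refine ⟨c, ?_, hc⟩
  rintro rfl
  exact hw_ne ((CStarRing.star_mul_self_eq_zero_iff w).mp (by rw [hc, zero_smul]))

theorem mul_eq_zero_of_mem_of_mem_centralizer (hg : IsSelfAdjoint g) (hg2 : g * g = 1)
    (hS : ∀ x ∈ S, g * x * g ∈ S)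
    (hcentral : ∀ z ∈ S, z ∈ centralizer (S : Set A) → g * z * g = z → ∃ c : ℂ, z = c • 1)
    {z : A} (hzS : z ∈ S) (hz : z ∈ centralizer (S : Set A)) (hz_ne : ¬ ∃ c : ℂ, z = c • 1)
    {x : A} (hxg : x * g ∈ S) (hx : x ∈ centralizer (S : Set A)) : x * g = 0 := by
  obtain ⟨w, hwS, hw, hw_odd, hw_ne⟩ :=
    exists_conj_eq_neg_of_not_scalar hg2 hS hcentral hzS hz hz_ne
  obtain ⟨c, hc_ne, hc⟩ :=
    exists_star_mul_self_eq_smul_one hg hg2 hcentral hwS hw hw_odd hw_ne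
  have hwa : w * (x * g) = 0 := by
    have := IsAddTorsionFree.of_isTorsionFree ℂ A
    exact self_eq_neg.mp
      ((hw _ hxg).symm.trans (mul_conj_mul_of_conj_eq_neg hg2 hw_odd (hx w hwS)))
  have hca : c • (x * g) = 0 := by
    rw [← one_mul (x * g), ← smul_mul_assoc, ← hc, mul_assoc, hwa, mul_zero]
  exact (smul_eq_zero.mp hca).resolve_left hc_ne

end CStarAlgebra

/-- Let `M ⊆ B(H)` be a von Neumann algebra spatially graded by a
self-adjoint unitary `Γ` (so `Ad_Γ(M) = M`), and suppose `M` is central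
(`Z(M) ∩ M⁽⁰⁾ = ℂ·1`). If `M` is not a factor, then `M ∩ M′Γ = {0}`. -/
theorem stmt4 {H : Type*} [NormedAddCommGroup H] [InnerProductSpace ℂ H] [CompleteSpace H]
    (M : VonNeumannAlgebra H) (Γ : H →L[ℂ] H)
    (hΓsa : IsSelfAdjoint Γ) (hΓ2 : Γ * Γ = 1)
    (hgrade : ∀ x ∈ M, Γ * x * Γ ∈ M)
    (hcentral : ∀ z ∈ M, (∀ y ∈ M, z * y = y * z) → Γ * z * Γ = z →
      ∃ c : ℂ, z = c • (1 : H →L[ℂ] H))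
    (hnotfactor : ∃ z ∈ M, (∀ y ∈ M, z * y = y * z) ∧
      ¬ ∃ c : ℂ, z = c • (1 : H →L[ℂ] H)) :
    ∀ a ∈ M, (∃ x', (∀ y ∈ M, x' * y = y * x') ∧ a = x' * Γ) → a = 0 := by
  rintro a haM ⟨x', hx', rfl⟩
  obtain ⟨z, hzM, hz, hz_ne⟩ := hnotfactor
  exact mul_eq_zero_of_mem_of_mem_centralizer (S := M.toStarSubalgebra) hΓsa hΓ2 hgrade
    (fun z hzM hz => hcentral z hzM fun y hy => (hz y hy).symm) hzM
    (fun y hy => (hz y hy).symm) hz_ne haM fun y hy => (hx' y hy).symm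
end

section
/- Let M ⊆ B(H) be a von Neumann algebra spatially graded by a self-adjoint unitary Γ with Ad_Γ(M) = M and Z(M) ∩ M⁽⁰⁾ = ℂ·1. If M ∩ M′Γ ≠ {0}, then there exists a self-adjoint unitary b ∈ M ∩ M′Γ with M ∩ M′Γ = ℂ·b. In particular, if Γ ∈ M then M ∩ M′Γ = ℂ·Γ. -/
/-!
Write `a = xΓ` and `b = yΓ` with `x, y ∈ M′`. Then `a⋆b = x⋆y` lies in `M ∩ M′`, and it commutes
with `Γ` because `x⋆` commutes with `b ∈ M` and `y` with `a⋆ ∈ M`; so `a⋆b` is a scalar for all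
`a, b ∈ M ∩ M′Γ`. As `Ad Γ` preserves `M′`, the space `M ∩ M′Γ` is `⋆`-closed, so a nonzero element
yields a nonzero self-adjoint one, which rescales to some `b` with `b² = 1`. Any `u` in the space
with `uu⋆ = 1` spans it, since `a = u(u⋆a)` and `u⋆a` is a scalar.
-/

open ComplexStarModule

theorem Submodule.exists_isSelfAdjoint_mem_ne_zero {A : Type*} [AddCommGroup A] [Module ℂ A]
    [StarAddMonoid A] [StarModule ℂ A] {p : Submodule ℂ A} (hp : ∀ a ∈ p, star a ∈ p)
    {a : A} (ha : a ∈ p) (ha0 : a ≠ 0) : ∃ b ∈ p, IsSelfAdjoint b ∧ b ≠ 0 := by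
  have hre : (ℜ a : A) ∈ p := by
    rw [realPart_apply_coe]
    exact p.smul_of_tower_mem _ (p.add_mem ha (hp a ha))
  have him : (ℑ a : A) ∈ p := by
    rw [imaginaryPart_apply_coe]
    exact p.smul_mem _ (p.smul_of_tower_mem _ (p.sub_mem ha (hp a ha)))
  by_cases h : (ℜ a : A) = 0
  · refine ⟨ℑ a, him, (ℑ a).2, fun h' => ha0 ?_⟩
    rw [← realPart_add_I_smul_imaginaryPart a, h, h', smul_zero, add_zero]
  · exact ⟨ℜ a, hre, (ℜ a).2, h⟩

theorem ContinuousLinearMap.exists_pos_of_star_mul_self_eq_smul_one {E : Type*}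
    [NormedAddCommGroup E] [InnerProductSpace ℂ E] [CompleteSpace E] {a : E →L[ℂ] E} {c : ℂ}
    (ha : a ≠ 0) (h : star a * a = c • 1) : ∃ r : ℝ, 0 < r ∧ c = r := by
  obtain ⟨v, hv⟩ : ∃ v, a v ≠ 0 := by
    by_contra! h0
    exact ha (ext h0)
  have hv0 : v ≠ 0 := fun h0 => hv (by simp [h0])
  have hnorm : (‖a v‖ ^ 2 : ℂ) = c * ‖v‖ ^ 2 := by
    have h' : inner ℂ (a v) (a v) = c * inner ℂ v v := by
      rw [← adjoint_inner_right, ← star_eq_adjoint, ← mul_apply_eq_comp, h, smul_apply,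
        one_apply_eq_self, inner_smul_right]
    simpa only [inner_self_eq_norm_sq_to_K, RCLike.ofReal_eq_complex_ofReal] using h'
  refine ⟨‖a v‖ ^ 2 / ‖v‖ ^ 2, by positivity, ?_⟩
  have : (‖v‖ : ℂ) ^ 2 ≠ 0 := by exact_mod_cast pow_ne_zero 2 (norm_ne_zero_iff.2 hv0)
  push_cast
  rw [hnorm, mul_div_cancel_right₀ _ this]

namespace VonNeumannAlgebra

variable {H : Type*} [NormedAddCommGroup H] [InnerProductSpace ℂ H] [CompleteSpace H]

/-- The subspace `M ∩ M′Γ`. -/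
noncomputable def twistedCenter (M : VonNeumannAlgebra H) (Γ : H →L[ℂ] H) :
    Submodule ℂ (H →L[ℂ] H) :=
  Subalgebra.toSubmodule M.toSubalgebra ⊓
    (Subalgebra.toSubmodule M.commutant.toSubalgebra).map (LinearMap.mulRight ℂ Γ)

variable {M : VonNeumannAlgebra H} {Γ : H →L[ℂ] H}

theorem mem_twistedCenter {a : H →L[ℂ] H} :
    a ∈ M.twistedCenter Γ ↔ a ∈ M ∧ ∃ x ∈ M.commutant, x * Γ = a :=
  Iff.rfl

theorem mem_twistedCenter_iff_forall_mul_comm {a : H →L[ℂ] H} :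
    a ∈ M.twistedCenter Γ ↔ a ∈ M ∧ ∃ x', (∀ y ∈ M, x' * y = y * x') ∧ a = x' * Γ := by
  simp only [mem_twistedCenter, eq_comm (a := a)]
  exact and_congr Iff.rfl <| exists_congr fun x => and_congr_left' <|
    mem_commutant_iff.trans <| forall₂_congr fun _ _ => eq_comm

theorem conj_mem_commutant (hΓ2 : Γ * Γ = 1) (hgrade : ∀ x ∈ M, Γ * x * Γ ∈ M)
    {x : H →L[ℂ] H} (hx : x ∈ M.commutant) : Γ * x * Γ ∈ M.commutant := by
  have hΓ2' (z : H →L[ℂ] H) : Γ * (Γ * z) = z := by rw [← mul_assoc, hΓ2, one_mul]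
  refine mem_commutant_iff.2 fun g hg => ?_
  have h := congrArg (Γ * · * Γ) (mem_commutant_iff.1 hx _ (hgrade g hg))
  simpa only [mul_assoc, hΓ2, hΓ2', mul_one] using h

theorem star_mem_twistedCenter (hΓsa : IsSelfAdjoint Γ) (hΓ2 : Γ * Γ = 1)
    (hgrade : ∀ x ∈ M, Γ * x * Γ ∈ M) {a : H →L[ℂ] H} (ha : a ∈ M.twistedCenter Γ) :
    star a ∈ M.twistedCenter Γ := by
  obtain ⟨haM, x, hx, rfl⟩ := mem_twistedCenter.1 ha
  refine mem_twistedCenter.2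
    ⟨star_mem haM, Γ * star x * Γ, conj_mem_commutant hΓ2 hgrade (star_mem hx), ?_⟩
  rw [star_mul, hΓsa.star_eq, mul_assoc, hΓ2, mul_one]

theorem star_mul_eq_smul_one (hΓsa : IsSelfAdjoint Γ) (hΓ2 : Γ * Γ = 1)
    (hcentral : ∀ z ∈ M, (∀ y ∈ M, z * y = y * z) → Γ * z * Γ = z →
      ∃ c : ℂ, z = c • (1 : H →L[ℂ] H))
    {a b : H →L[ℂ] H} (ha : a ∈ M.twistedCenter Γ) (hb : b ∈ M.twistedCenter Γ) :
    ∃ c : ℂ, star a * b = c • 1 := by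
  obtain ⟨haM, x, hx, rfl⟩ := mem_twistedCenter.1 ha
  obtain ⟨hbM, y, hy, rfl⟩ := mem_twistedCenter.1 hb
  have haM' : Γ * star x ∈ M := by simpa only [star_mul, hΓsa.star_eq] using star_mem haM
  have hΓ : Γ * (star x * y) = star x * y * Γ := calc
    Γ * (star x * y) = y * (Γ * star x) := by
      rw [← mul_assoc, mem_commutant_iff.1 hy _ haM']
    _ = star x * y * Γ := by
      rw [← mul_assoc, mem_commutant_iff.1 (star_mem hx) _ hbM, mul_assoc]
  have hprod : star (x * Γ) * (y * Γ) = star x * y := by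
    rw [star_mul, hΓsa.star_eq, mul_assoc, ← mul_assoc (star x), ← mul_assoc Γ, hΓ, mul_assoc,
      hΓ2, mul_one]
  rw [hprod]
  refine hcentral _ (hprod ▸ mul_mem (star_mem haM) hbM) (fun g hg => ?_) ?_
  · exact (mem_commutant_iff.1 (mul_mem (star_mem hx) hy) g hg).symm
  · rw [hΓ, mul_assoc, hΓ2, mul_one]

theorem eq_smul_of_mem_twistedCenter (hΓsa : IsSelfAdjoint Γ) (hΓ2 : Γ * Γ = 1)
    (hcentral : ∀ z ∈ M, (∀ y ∈ M, z * y = y * z) → Γ * z * Γ = z →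
      ∃ c : ℂ, z = c • (1 : H →L[ℂ] H))
    {u : H →L[ℂ] H} (hu : u ∈ M.twistedCenter Γ) (hu1 : u * star u = 1)
    {a : H →L[ℂ] H} (ha : a ∈ M.twistedCenter Γ) : ∃ c : ℂ, a = c • u := by
  obtain ⟨c, hc⟩ := star_mul_eq_smul_one hΓsa hΓ2 hcentral hu ha
  refine ⟨c, ?_⟩
  rw [← one_mul a, ← hu1, mul_assoc, hc, mul_smul_comm, mul_one]

theorem exists_isSelfAdjoint_mul_self_eq_one (hΓsa : IsSelfAdjoint Γ) (hΓ2 : Γ * Γ = 1)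
    (hgrade : ∀ x ∈ M, Γ * x * Γ ∈ M)
    (hcentral : ∀ z ∈ M, (∀ y ∈ M, z * y = y * z) → Γ * z * Γ = z →
      ∃ c : ℂ, z = c • (1 : H →L[ℂ] H))
    {a : H →L[ℂ] H} (ha : a ∈ M.twistedCenter Γ) (ha0 : a ≠ 0) :
    ∃ b ∈ M.twistedCenter Γ, IsSelfAdjoint b ∧ b * b = 1 := by
  obtain ⟨s, hs, hssa, hs0⟩ := Submodule.exists_isSelfAdjoint_mem_ne_zero
    (fun _ => star_mem_twistedCenter hΓsa hΓ2 hgrade) ha ha0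
  obtain ⟨c, hc⟩ := star_mul_eq_smul_one hΓsa hΓ2 hcentral hs hs
  obtain ⟨r, hr, rfl⟩ := ContinuousLinearMap.exists_pos_of_star_mul_self_eq_smul_one hs0 hc
  refine ⟨(√r)⁻¹ • s, Submodule.smul_of_tower_mem _ _ hs, .smul (.all _) hssa, ?_⟩
  rw [hssa.star_eq] at hc
  rw [smul_mul_smul, hc, Complex.coe_smul, smul_smul, ← mul_inv,
    Real.mul_self_sqrt hr.le, inv_mul_cancel₀ hr.ne', one_smul]

end VonNeumannAlgebra

/-- Let `M ⊆ B(H)` be a von Neumann algebra spatially graded by a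
self-adjoint unitary `Γ` with `Ad_Γ(M) = M` and `Z(M) ∩ M⁽⁰⁾ = ℂ·1`.  If `M ∩ M′Γ ≠ {0}`,
then there is a self-adjoint unitary `b ∈ M ∩ M′Γ` with `M ∩ M′Γ = ℂ·b`.  In particular,
if `Γ ∈ M` then `M ∩ M′Γ = ℂ·Γ`. -/
theorem stmt5 {H : Type*} [NormedAddCommGroup H] [InnerProductSpace ℂ H] [CompleteSpace H]
    (M : VonNeumannAlgebra H) (Γ : H →L[ℂ] H)
    (hΓsa : IsSelfAdjoint Γ) (hΓ2 : Γ * Γ = 1)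
    (hgrade : ∀ x ∈ M, Γ * x * Γ ∈ M)
    (hcentral : ∀ z ∈ M, (∀ y ∈ M, z * y = y * z) → Γ * z * Γ = z →
      ∃ c : ℂ, z = c • (1 : H →L[ℂ] H))
    (hne : ∃ a, a ∈ M ∧ (∃ x', (∀ y ∈ M, x' * y = y * x') ∧ a = x' * Γ) ∧ a ≠ 0) :
    (∃ b, b ∈ M ∧ (∃ x', (∀ y ∈ M, x' * y = y * x') ∧ b = x' * Γ) ∧
      IsSelfAdjoint b ∧ b * b = 1 ∧
      ∀ a, a ∈ M → (∃ x', (∀ y ∈ M, x' * y = y * x') ∧ a = x' * Γ) →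
        ∃ c : ℂ, a = c • b) ∧
    (Γ ∈ M → ∀ a, a ∈ M → (∃ x', (∀ y ∈ M, x' * y = y * x') ∧ a = x' * Γ) →
      ∃ c : ℂ, a = c • Γ) := by
  have hmem {z : H →L[ℂ] H} (hzM : z ∈ M) (hz : ∃ x', (∀ y ∈ M, x' * y = y * x') ∧ z = x' * Γ) :
      z ∈ M.twistedCenter Γ :=
    VonNeumannAlgebra.mem_twistedCenter_iff_forall_mul_comm.2 ⟨hzM, hz⟩
  have hspan {u : H →L[ℂ] H} (hu : u ∈ M.twistedCenter Γ) (hu1 : u * star u = 1) (z : H →L[ℂ] H)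
      (hzM : z ∈ M) (hz : ∃ x', (∀ y ∈ M, x' * y = y * x') ∧ z = x' * Γ) : ∃ c : ℂ, z = c • u :=
    VonNeumannAlgebra.eq_smul_of_mem_twistedCenter hΓsa hΓ2 hcentral hu hu1 (hmem hzM hz)
  obtain ⟨a, haM, ha, ha0⟩ := hne
  obtain ⟨b, hb, hbsa, hb2⟩ := VonNeumannAlgebra.exists_isSelfAdjoint_mul_self_eq_one
    hΓsa hΓ2 hgrade hcentral (hmem haM ha) ha0
  obtain ⟨hbM, hbΓ⟩ := VonNeumannAlgebra.mem_twistedCenter_iff_forall_mul_comm.1 hb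
  refine ⟨⟨b, hbM, hbΓ, hbsa, hb2, hspan hb (by rw [hbsa.star_eq, hb2])⟩, fun hΓM => ?_⟩
  exact hspan (hmem hΓM ⟨1, fun y _ => by rw [one_mul, mul_one], (one_mul Γ).symm⟩)
    (by rw [hΓsa.star_eq, hΓ2])
end

section
/- Let H be a complex Hilbert space and {Bμ}_{μ∈P}, {Tμ}_{μ∈P} finite families of operators on H such that Bμ*Bν = Tμ*Tν = δ_{μν}I, Bμ Bν* = Tμ Tν* = E_{μν} where {E_{μν}} are matrix units of a finite type I factor (E_{μν}* = E_{νμ}, E_{μν}E_{λρ} = δ_{νλ}E_{μρ}, Σ_μ E_{μμ} = I), and suppose that for a self-adjoint unitary Γ, Σ_μ Bμ Γ^{|μ|} x Γ^{|μ|} Bμ* = Σ_μ Tμ Γ^{|μ|} x Γ^{|μ|} Tμ* for all x ∈ B(H). Then there exists c ∈ U(1) such that Tμ = c·Bμ for all μ ∈ P. -/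
/-!
Fix `ν` and put `A = Tν* Bν`. Compressing the identity
`Σ_μ Bμ Gμ x Gμ Bμ* = Σ_μ Tμ Gμ x Gμ Tμ*` (with `Gμ = Γ^{|μ|}`, `Gμ² = 1`) by `Tν*` on the left
and `Bν` on the right kills every term with `μ ≠ ν`, because
`Tν* Bμ = Tν* Tν Tν* Bμ = Tν* Bν Bν* Bμ`.
With `x = Gν y Gν` what remains reads `A y = y A`, so `A` lies in the commutant `ℂ I` of `B(H)`.
The matrix units give `Tμ Tν* = Bμ Bν*`, from which `A` is independent of `ν`, `A* A = 1`, and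
`Tμ = Bμ Bμ* Tμ = Bμ A*`.
-/

open scoped InnerProductSpace

section StarRing

variable {R : Type*} [Ring R] [StarRing R]

theorem star_mul_sum_mul_mul_star {P : Type*} [Fintype P] (U V z : P → R) {ν : P}
    (hUV : ∀ μ, μ ≠ ν → star (U ν) * V μ = 0) :
    star (U ν) * ∑ μ, V μ * z μ * star (V μ) = star (U ν) * V ν * z ν * star (V ν) := by
  rw [Finset.mul_sum, Finset.sum_eq_single ν]
  · simp only [mul_assoc]
  · intro μ _ hμ
    simp only [← mul_assoc, hUV μ hμ, zero_mul]
  · exact fun h => (h (Finset.mem_univ ν)).elim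

theorem star_mul_eq_zero_of_mul_star_eq {b b' t : R} (ht : star t * t = 1)
    (hbb' : star b * b' = 0) (h : b * star b = t * star t) : star t * b' = 0 := by
  calc star t * b' = star t * (t * star t) * b' := by rw [← mul_assoc, ht, one_mul]
    _ = 0 := by rw [← h, mul_assoc, mul_assoc, hbb', mul_zero, mul_zero]

theorem star_mul_eq_star_mul_of_mul_star_eq {b b' t t' : R} (ht : star t * t = 1)
    (hb' : star b' * b' = 1) (h : b * star b' = t * star t') : star t * b = star t' * b' := by
  calc star t * b = star t * (b * star b') * b' := by rw [mul_assoc, mul_assoc, hb', mul_one]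
    _ = star t' * b' := by rw [h, ← mul_assoc, ht, one_mul]

theorem eq_mul_star_star_mul {b t : R} (ht : star t * t = 1) (h : b * star b = t * star t) :
    t = b * star (star t * b) := by
  rw [star_mul, star_star, ← mul_assoc, h, mul_assoc, ht, mul_one]

theorem star_mul_self_star_mul {b t : R} (hb : star b * b = 1) (h : b * star b = t * star t) :
    star (star t * b) * (star t * b) = 1 := by
  rw [star_mul, star_star, mul_assoc, ← mul_assoc t, ← h, ← mul_assoc, ← mul_assoc, hb, one_mul, hb]

theorem commute_star_mul_of_sum_conj_eq {P : Type*} [Fintype P] [DecidableEq P] (B T G : P → R)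
    (hG : ∀ μ, G μ * G μ = 1)
    (hB : ∀ μ ν, star (B μ) * B ν = if μ = ν then 1 else 0)
    (hT : ∀ μ ν, star (T μ) * T ν = if μ = ν then 1 else 0)
    (hBT : ∀ μ, B μ * star (B μ) = T μ * star (T μ))
    (hρ : ∀ x, ∑ μ, B μ * G μ * x * G μ * star (B μ) = ∑ μ, T μ * G μ * x * G μ * star (T μ))
    (ν : P) (y : R) : Commute (star (T ν) * B ν) y := by
  have hBB : star (B ν) * B ν = 1 := by rw [hB, if_pos rfl]
  have hTT : star (T ν) * T ν = 1 := by rw [hT, if_pos rfl]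
  have hTB : ∀ μ, μ ≠ ν → star (T ν) * B μ = 0 := fun μ hμ =>
    star_mul_eq_zero_of_mul_star_eq hTT (by rw [hB, if_neg hμ.symm]) (hBT ν)
  have hTT' : ∀ μ, μ ≠ ν → star (T ν) * T μ = 0 := fun μ hμ => by rw [hT, if_neg hμ.symm]
  have hGyG : G ν * (G ν * y * G ν) * G ν = y := by
    rw [← mul_assoc, ← mul_assoc, hG, one_mul, mul_assoc, hG, mul_one]
  have hconj : ∑ μ, B μ * (G μ * (G ν * y * G ν) * G μ) * star (B μ) =
      ∑ μ, T μ * (G μ * (G ν * y * G ν) * G μ) * star (T μ) := by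
    simpa only [mul_assoc] using hρ (G ν * y * G ν)
  have key := congrArg (fun s => star (T ν) * s * B ν) hconj
  simp only [star_mul_sum_mul_mul_star _ _ _ hTB, star_mul_sum_mul_mul_star _ _ _ hTT'] at key
  rw [hGyG, hTT, one_mul, mul_assoc _ (star (B ν)), hBB, mul_one, mul_assoc y] at key
  exact key

end StarRing

namespace ContinuousLinearMap

variable {𝕜 H : Type*} [RCLike 𝕜] [NormedAddCommGroup H] [InnerProductSpace 𝕜 H]

theorem exists_eq_smul_one_of_forall_commute {A : H →L[𝕜] H} (hA : ∀ x, Commute A x) :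
    ∃ c : 𝕜, A = c • 1 := by
  cases subsingleton_or_nontrivial H with
  | inl _ => exact ⟨0, Subsingleton.elim _ _⟩
  | inr _ =>
    obtain ⟨v, hv⟩ := exists_ne (0 : H)
    refine ⟨⟪v, A v⟫_𝕜 / ⟪v, v⟫_𝕜, ext fun w => ?_⟩
    -- commuting with the rank-one operator `⟪v, ·⟫ w` gives `⟪v, v⟫ A w = ⟪v, A v⟫ w`
    have key := congrArg (· v) (hA ((innerSL 𝕜 v).smulRight w)).eq
    simp only [mul_apply_eq_comp, smulRight_apply, innerSL_apply_apply, map_smul] at key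
    rw [smul_apply, one_apply_eq_self, div_eq_inv_mul, mul_smul, ← key,
      inv_smul_smul₀ (inner_self_ne_zero.mpr hv)]

theorem exists_norm_eq_one_of_forall_commute [CompleteSpace H] {A : H →L[𝕜] H}
    (hA : ∀ x, Commute A x) (hA1 : star A * A = 1) : ∃ c : 𝕜, ‖c‖ = 1 ∧ A = c • 1 := by
  cases subsingleton_or_nontrivial H with
  | inl _ => exact ⟨1, norm_one, Subsingleton.elim _ _⟩
  | inr _ =>
    obtain ⟨c, rfl⟩ := exists_eq_smul_one_of_forall_commute hA
    rw [star_smul, star_one, smul_mul_smul_comm, one_mul] at hA1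
    have hc : (‖c‖ : 𝕜) ^ 2 = 1 :=
      RCLike.conj_mul c ▸ smul_left_injective 𝕜 one_ne_zero (hA1.trans (one_smul 𝕜 1).symm)
    refine ⟨c, ?_, rfl⟩
    exact (pow_eq_one_iff_of_nonneg (norm_nonneg c) two_ne_zero).mp (mod_cast hc)

end ContinuousLinearMap

theorem stmt14_general {H : Type*} [NormedAddCommGroup H] [InnerProductSpace ℂ H] [CompleteSpace H]
    {P : Type*} [Fintype P] [DecidableEq P] (par : P → ZMod 2)
    (B T : P → H →L[ℂ] H) (E : P → P → H →L[ℂ] H) (Γ : H →L[ℂ] H)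
    (hΓ2 : Γ * Γ = 1)
    (hB : ∀ μ ν : P, star (B μ) * B ν = if μ = ν then 1 else 0)
    (hT : ∀ μ ν : P, star (T μ) * T ν = if μ = ν then 1 else 0)
    (hBE : ∀ μ ν : P, B μ * star (B ν) = E μ ν)
    (hTE : ∀ μ ν : P, T μ * star (T ν) = E μ ν)
    (hρ : ∀ x : H →L[ℂ] H,
      ∑ μ : P, B μ * Γ ^ (par μ).val * x * Γ ^ (par μ).val * star (B μ) =
      ∑ μ : P, T μ * Γ ^ (par μ).val * x * Γ ^ (par μ).val * star (T μ)) :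
    ∃ c : ℂ, ‖c‖ = 1 ∧ ∀ μ : P, T μ = c • B μ := by
  rcases isEmpty_or_nonempty P with _ | ⟨⟨ν₀⟩⟩
  · exact ⟨1, norm_one, isEmptyElim⟩
  have hBT : ∀ μ ν, B μ * star (B ν) = T μ * star (T ν) := fun μ ν =>
    (hBE μ ν).trans (hTE μ ν).symm
  have hBB : ∀ μ, star (B μ) * B μ = 1 := fun μ => by rw [hB, if_pos rfl]
  have hTT : ∀ μ, star (T μ) * T μ = 1 := fun μ => by rw [hT, if_pos rfl]
  have hG : ∀ μ, Γ ^ (par μ).val * Γ ^ (par μ).val = 1 := fun μ => by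
    rw [← pow_add, ← two_mul, pow_mul, sq, hΓ2, one_pow]
  obtain ⟨c, hc, hA⟩ := ContinuousLinearMap.exists_norm_eq_one_of_forall_commute
    (commute_star_mul_of_sum_conj_eq B T _ hG hB hT (fun μ => hBT μ μ) hρ ν₀)
    (star_mul_self_star_mul (hBB ν₀) (hBT ν₀ ν₀))
  refine ⟨star c, by rwa [norm_star], fun μ => ?_⟩
  rw [eq_mul_star_star_mul (hTT μ) (hBT μ μ),
    star_mul_eq_star_mul_of_mul_star_eq (hTT μ) (hBB ν₀) (hBT μ ν₀), hA, star_smul, star_one,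
    mul_smul_comm, mul_one]

/-- Let `{Bμ}`, `{Tμ}` be families of isometries on a Hilbert space with
`Bμ*Bν = Tμ*Tν = δ_{μν}` and `Bμ Bν* = Tμ Tν* = E_{μν}` for a system of matrix units
`{E_{μν}}` of a finite type I factor, and let `Γ` be a self-adjoint unitary.  If
`Σ_μ Bμ Γ^{|μ|} x Γ^{|μ|} Bμ* = Σ_μ Tμ Γ^{|μ|} x Γ^{|μ|} Tμ*` for all `x ∈ B(H)`, then
there is `c ∈ U(1)` with `Tμ = c·Bμ` for all `μ`. -/
theorem stmt14 {H : Type*} [NormedAddCommGroup H] [InnerProductSpace ℂ H] [CompleteSpace H]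
    {P : Type*} [Fintype P] [DecidableEq P] (par : P → ZMod 2)
    (B T : P → H →L[ℂ] H) (E : P → P → H →L[ℂ] H) (Γ : H →L[ℂ] H)
    (hΓsa : IsSelfAdjoint Γ) (hΓ2 : Γ * Γ = 1)
    (hB : ∀ μ ν : P, star (B μ) * B ν = if μ = ν then 1 else 0)
    (hT : ∀ μ ν : P, star (T μ) * T ν = if μ = ν then 1 else 0)
    (hBE : ∀ μ ν : P, B μ * star (B ν) = E μ ν)
    (hTE : ∀ μ ν : P, T μ * star (T ν) = E μ ν)
    (hEstar : ∀ μ ν : P, star (E μ ν) = E ν μ)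
    (hEmul : ∀ μ ν lam ρ : P, E μ ν * E lam ρ = if ν = lam then E μ ρ else 0)
    (hEsum : ∑ μ : P, E μ μ = 1)
    (hρ : ∀ x : H →L[ℂ] H,
      ∑ μ : P, B μ * Γ ^ (par μ).val * x * Γ ^ (par μ).val * star (B μ) =
      ∑ μ : P, T μ * Γ ^ (par μ).val * x * Γ ^ (par μ).val * star (T μ)) :
    ∃ c : ℂ, ‖c‖ = 1 ∧ ∀ μ : P, T μ = c • B μ :=
  stmt14_general par B T E Γ hΓ2 hB hT hBE hTE hρ
end
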